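/- The coproduct Δ defined on generators of A_{r,s} by Δ(a) = a⊗a + b⊗c, Δ(b) = a⊗b + b⊗d, Δ(c) = c⊗a + d⊗c, Δ(d) = c⊗b + d⊗d, Δ(f) = f⊗f, Δ(f^{-1}) = f^{-1}⊗f^{-1} extends to a well-defined algebra homomorphism Δ : A_{r,s} → A_{r,s} ⊗ A_{r,s}; i.e., the defining relations of A_{r,s} are preserved by Δ. -/

import Mathlib

open scoped TensorProduct

noncomputable section

/-- Generators of the cross-product algebra `A_{r,s}`. -/
inductive Gen : Type
  | a | b | c | d | f | fi
deriving DecidableEq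

/-- The free algebra on the generators. -/
abbrev FA : Type := FreeAlgebra ℂ Gen

/-- The generators inside the free algebra. -/
def X (g : Gen) : FA := FreeAlgebra.ι ℂ g

/-- The defining relations of `A_{r,s}`. -/
inductive ArsRel (r s : ℂ) : FA → FA → Prop
  | ab : ArsRel r s (X .a * X .b) (r⁻¹ • (X .b * X .a))
  | bd : ArsRel r s (X .b * X .d) (r⁻¹ • (X .d * X .b))
  | ac : ArsRel r s (X .a * X .c) (r⁻¹ • (X .c * X .a))
  | cd : ArsRel r s (X .c * X .d) (r⁻¹ • (X .d * X .c))
  | bc : ArsRel r s (X .b * X .c) (X .c * X .b)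
  | ad : ArsRel r s (X .a * X .d - X .d * X .a) ((r⁻¹ - r) • (X .b * X .c))
  | af : ArsRel r s (X .a * X .f) (X .f * X .a)
  | cf : ArsRel r s (X .c * X .f) (s • (X .f * X .c))
  | bf : ArsRel r s (X .b * X .f) (s⁻¹ • (X .f * X .b))
  | df : ArsRel r s (X .d * X .f) (X .f * X .d)
  | ffi : ArsRel r s (X .f * X .fi) 1
  | fif : ArsRel r s (X .fi * X .f) 1

/-- The cross-product quantum algebra `A_{r,s}`. -/
abbrev Ars (r s : ℂ) : Type := RingQuot (ArsRel r s)

/-- The generators of `A_{r,s}`. -/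
def gen (r s : ℂ) (g : Gen) : Ars r s := RingQuot.mkAlgHom ℂ (ArsRel r s) (X g)

/-!
Expanding `Δ(x) Δ(y)` for a defining relation `xy = λ yx` and reordering every product of
generators in each tensor factor into the normal order `f, d, c, b, a` by the relations themselves,
both sides become combinations of the same tensors, with coefficients that agree once
`r r⁻¹ = 1` and `s s⁻¹ = 1`. The computation only uses the relations, so it works for any family
of elements of any algebra satisfying them; `Δ` then comes from the universal property of `A_{r,s}`.
-/

namespace Ars

open TensorProduct

variable {r s : ℂ} {A : Type*} [Ring A] [Algebra ℂ A]

structure Relations (r s : ℂ) (x : Gen → A) : Prop where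
  ab : x .a * x .b = r⁻¹ • (x .b * x .a)
  bd : x .b * x .d = r⁻¹ • (x .d * x .b)
  ac : x .a * x .c = r⁻¹ • (x .c * x .a)
  cd : x .c * x .d = r⁻¹ • (x .d * x .c)
  bc : x .b * x .c = x .c * x .b
  ad : x .a * x .d - x .d * x .a = (r⁻¹ - r) • (x .b * x .c)
  af : x .a * x .f = x .f * x .a
  cf : x .c * x .f = s • (x .f * x .c)
  bf : x .b * x .f = s⁻¹ • (x .f * x .b)
  df : x .d * x .f = x .f * x .d
  ffi : x .f * x .fi = 1
  fif : x .fi * x .f = 1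

theorem Relations.ad_eq {x : Gen → A} (h : Relations r s x) :
    x .a * x .d = x .d * x .a + (r⁻¹ - r) • (x .c * x .b) := by
  rw [← h.bc, ← h.ad, add_sub_cancel]

theorem Relations.lift_eq {x : Gen → A} (h : Relations r s x) {p q : FA} (hpq : ArsRel r s p q) :
    FreeAlgebra.lift ℂ x p = FreeAlgebra.lift ℂ x q := by
  obtain ⟨_, _, _, _, _, _, _, _, _, _, _, _⟩ := h
  cases hpq <;> simpa only [X, map_mul, map_sub, map_smul, map_one, FreeAlgebra.lift_ι_apply]

theorem relations_gen : Relations r s (gen r s) := by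
  constructor <;>
  · simp only [gen, ← map_mul, ← map_sub, ← map_smul, ← map_one (RingQuot.mkAlgHom ℂ (ArsRel r s))]
    exact RingQuot.mkAlgHom_rel ℂ (by constructor)

def liftOfRelations {x : Gen → A} (h : Relations r s x) : Ars r s →ₐ[ℂ] A :=
  RingQuot.liftAlgHom ℂ ⟨FreeAlgebra.lift ℂ x, fun _ _ => h.lift_eq⟩

theorem liftOfRelations_gen {x : Gen → A} (h : Relations r s x) (g : Gen) :
    liftOfRelations h (gen r s g) = x g := by
  simp only [liftOfRelations, gen, RingQuot.liftAlgHom_mkAlgHom_apply, X,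
    FreeAlgebra.lift_ι_apply]

def matrixCoproduct (x : Gen → A) : Gen → A ⊗[ℂ] A
  | .a => x .a ⊗ₜ x .a + x .b ⊗ₜ x .c
  | .b => x .a ⊗ₜ x .b + x .b ⊗ₜ x .d
  | .c => x .c ⊗ₜ x .a + x .d ⊗ₜ x .c
  | .d => x .c ⊗ₜ x .b + x .d ⊗ₜ x .d
  | .f => x .f ⊗ₜ x .f
  | .fi => x .fi ⊗ₜ x .fi

theorem Relations.matrixCoproduct (hr : r ≠ 0) (hs : s ≠ 0) {x : Gen → A}
    (h : Relations r s x) : Relations r s (matrixCoproduct x) := by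
  constructor <;>
    simp only [Ars.matrixCoproduct, add_mul, mul_add, Algebra.TensorProduct.tmul_mul_tmul,
      h.ab, h.bd, h.ac, h.cd, h.bc, h.ad_eq, h.af, h.cf, h.bf, h.df, h.ffi, h.fif,
      Algebra.TensorProduct.one_def, ← smul_tmul', tmul_smul, tmul_add, add_tmul, smul_add,
      smul_smul]
  all_goals match_scalars <;> field_simp <;> ring

end Ars

/-- The matrix coproduct `Δ(T) = T ⊗̇ T`, `Δ(f) = f ⊗ f` extends to a well-defined
algebra homomorphism `Δ : A_{r,s} → A_{r,s} ⊗ A_{r,s}`. -/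
theorem stmt3 (r s : ℂ) (hr : r ≠ 0) (hs : s ≠ 0) :
    ∃ Δ : Ars r s →ₐ[ℂ] (Ars r s ⊗[ℂ] Ars r s),
      Δ (gen r s .a) = gen r s .a ⊗ₜ[ℂ] gen r s .a + gen r s .b ⊗ₜ[ℂ] gen r s .c ∧
      Δ (gen r s .b) = gen r s .a ⊗ₜ[ℂ] gen r s .b + gen r s .b ⊗ₜ[ℂ] gen r s .d ∧
      Δ (gen r s .c) = gen r s .c ⊗ₜ[ℂ] gen r s .a + gen r s .d ⊗ₜ[ℂ] gen r s .c ∧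
      Δ (gen r s .d) = gen r s .c ⊗ₜ[ℂ] gen r s .b + gen r s .d ⊗ₜ[ℂ] gen r s .d ∧
      Δ (gen r s .f) = gen r s .f ⊗ₜ[ℂ] gen r s .f ∧
      Δ (gen r s .fi) = gen r s .fi ⊗ₜ[ℂ] gen r s .fi := by
  have h := (Ars.relations_gen (r := r) (s := s)).matrixCoproduct hr hs
  exact ⟨Ars.liftOfRelations h, Ars.liftOfRelations_gen h .a, Ars.liftOfRelations_gen h .b,
    Ars.liftOfRelations_gen h .c, Ars.liftOfRelations_gen h .d, Ars.liftOfRelations_gen h .f,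
    Ars.liftOfRelations_gen h .fi⟩
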